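/- In the Hegselmann–Krause bounded-confidence model, the order of opinions is preserved: if x_i(t) ≤ x_j(t) for agents i, j, then x_i(t+1) ≤ x_j(t+1). Moreover the opinion range [min_i x_i(t), max_i x_i(t)] is non-increasing in t. -/
import Mathlib

/-- Hegselmann–Krause neighborhood of agent i at state x with confidence ε. -/
noncomputable def hkNbrs {n : ℕ} (ε : ℝ) (x : Fin n → ℝ) (i : Fin n) :
    Finset (Fin n) :=
  Finset.univ.filter fun j => |x i - x j| ≤ ε

lemma hk_mem {n : ℕ} {ε : ℝ} {x : Fin n → ℝ} {i k : Fin n} :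
    k ∈ hkNbrs ε x i ↔ -ε ≤ x i - x k ∧ x i - x k ≤ ε := by
  simp [hkNbrs, abs_le]

lemma hk_self_mem {n : ℕ} {ε : ℝ} (hε : 0 ≤ ε) (x : Fin n → ℝ) (i : Fin n) :
    i ∈ hkNbrs ε x i := by
  simp [hk_mem, hε, neg_nonpos.mpr hε]

lemma avg_le_of_forall {α : Type*} {s : Finset α} (hs : s.Nonempty) {f : α → ℝ} {m : ℝ}
    (h : ∀ a ∈ s, f a ≤ m) : (∑ a ∈ s, f a) / s.card ≤ m := by
  have hc : (0:ℝ) < s.card := by exact_mod_cast Finset.card_pos.mpr hs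
  rw [div_le_iff₀ hc]
  calc ∑ a ∈ s, f a ≤ ∑ _a ∈ s, m := Finset.sum_le_sum h
    _ = m * s.card := by rw [Finset.sum_const, nsmul_eq_mul, mul_comm]

lemma le_avg_of_forall {α : Type*} {s : Finset α} (hs : s.Nonempty) {f : α → ℝ} {m : ℝ}
    (h : ∀ a ∈ s, m ≤ f a) : m ≤ (∑ a ∈ s, f a) / s.card := by
  have hc : (0:ℝ) < s.card := by exact_mod_cast Finset.card_pos.mpr hs
  rw [le_div_iff₀ hc]
  calc m * s.card = ∑ _a ∈ s, m := by rw [Finset.sum_const, nsmul_eq_mul, mul_comm]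
    _ ≤ ∑ a ∈ s, f a := Finset.sum_le_sum h

/-- Average over a set whose `A ∩ B` part averages exactly `m` and whose `A \ B`
part is bounded above by `m`, is at most `m`. -/
lemma avg_split_le {α : Type*} [DecidableEq α] {A B : Finset α} {f : α → ℝ} {m : ℝ}
    (hA : A.Nonempty)
    (hCm : ∑ a ∈ A ∩ B, f a = m * (A ∩ B).card)
    (hD : ∀ a ∈ A \ B, f a ≤ m) :
    (∑ a ∈ A, f a) / A.card ≤ m := by
  have hc : (0:ℝ) < A.card := by exact_mod_cast Finset.card_pos.mpr hA
  rw [div_le_iff₀ hc]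
  have hsplit := Finset.sum_inter_add_sum_sdiff A B f
  have hcard : (A ∩ B).card + (A \ B).card = A.card :=
    Finset.card_inter_add_card_sdiff A B
  have hDsum : ∑ a ∈ A \ B, f a ≤ m * (A \ B).card := by
    calc ∑ a ∈ A \ B, f a ≤ ∑ _a ∈ A \ B, m := Finset.sum_le_sum hD
      _ = m * (A \ B).card := by rw [Finset.sum_const, nsmul_eq_mul, mul_comm]
  have hcast : (A.card : ℝ) = (A ∩ B).card + (A \ B).card := by exact_mod_cast hcard.symm
  rw [← hsplit, hcast]
  nlinarith [hDsum, hCm]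

lemma le_avg_split {α : Type*} [DecidableEq α] {A B : Finset α} {f : α → ℝ} {m : ℝ}
    (hA : A.Nonempty)
    (hCm : ∑ a ∈ A ∩ B, f a = m * (A ∩ B).card)
    (hD : ∀ a ∈ A \ B, m ≤ f a) :
    m ≤ (∑ a ∈ A, f a) / A.card := by
  have hc : (0:ℝ) < A.card := by exact_mod_cast Finset.card_pos.mpr hA
  rw [le_div_iff₀ hc]
  have hsplit := Finset.sum_inter_add_sum_sdiff A B f
  have hcard : (A ∩ B).card + (A \ B).card = A.card :=
    Finset.card_inter_add_card_sdiff A B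
  have hDsum : m * (A \ B).card ≤ ∑ a ∈ A \ B, f a := by
    calc m * (A \ B).card = ∑ _a ∈ A \ B, m := by
          rw [Finset.sum_const, nsmul_eq_mul, mul_comm]
      _ ≤ ∑ a ∈ A \ B, f a := Finset.sum_le_sum hD
  have hcast : (A.card : ℝ) = (A ∩ B).card + (A \ B).card := by exact_mod_cast hcard.symm
  rw [← hsplit, hcast]
  nlinarith [hDsum, hCm]

/-- One-step order preservation for the HK averages. -/
lemma hk_avg_mono {n : ℕ} {ε : ℝ} (hε : 0 ≤ ε) {x : Fin n → ℝ} {i j : Fin n}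
    (hij : x i ≤ x j) :
    (∑ k ∈ hkNbrs ε x i, x k) / (hkNbrs ε x i).card ≤
      (∑ k ∈ hkNbrs ε x j, x k) / (hkNbrs ε x j).card := by
  set A := hkNbrs ε x i with hAdef
  set B := hkNbrs ε x j with hBdef
  have hAne : A.Nonempty := ⟨i, hk_self_mem hε x i⟩
  have hBne : B.Nonempty := ⟨j, hk_self_mem hε x j⟩
  have hAB : ∀ a ∈ A \ B, x a < x j - ε := by
    intro a ha
    rw [Finset.mem_sdiff] at ha
    obtain ⟨haA, haB⟩ := ha
    rw [hAdef, hk_mem] at haA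
    rw [hBdef, hk_mem] at haB
    push_neg at haB
    by_cases h : -ε ≤ x j - x a
    · have := haB h; linarith
    · push_neg at h; linarith [haA.1]
  have hBA : ∀ b ∈ B \ A, x i + ε < x b := by
    intro b hb
    rw [Finset.mem_sdiff] at hb
    obtain ⟨hbB, hbA⟩ := hb
    rw [hBdef, hk_mem] at hbB
    rw [hAdef, hk_mem] at hbA
    push_neg at hbA
    by_cases h : -ε ≤ x i - x b
    · have := hbA h; linarith
    · push_neg at h; linarith
  have hC : ∀ c ∈ A ∩ B, x j - ε ≤ x c ∧ x c ≤ x i + ε := by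
    intro c hc
    rw [Finset.mem_inter] at hc
    obtain ⟨hcA, hcB⟩ := hc
    rw [hAdef, hk_mem] at hcA
    rw [hBdef, hk_mem] at hcB
    exact ⟨by linarith [hcB.2], by linarith [hcA.1]⟩
  rcases (A ∩ B).eq_empty_or_nonempty with hCe | hCne
  · -- disjoint neighborhoods: everyone in A is ≤ x i + ε < everyone in B
    have h1 : (∑ k ∈ A, x k) / A.card ≤ x i + ε := by
      apply avg_le_of_forall hAne
      intro a ha
      have : a ∈ A := ha
      rw [hAdef, hk_mem] at this
      linarith [this.1]
    have h2 : x i + ε ≤ (∑ k ∈ B, x k) / B.card := by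
      apply le_avg_of_forall hBne
      intro b hb
      have hbA : b ∉ A := fun hA' =>
        (Finset.notMem_empty b) (hCe ▸ Finset.mem_inter.mpr ⟨hA', hb⟩)
      exact le_of_lt (hBA b (Finset.mem_sdiff.mpr ⟨hb, hbA⟩))
    linarith
  · set m := (∑ c ∈ A ∩ B, x c) / (A ∩ B).card with hm
    have hcpos : (0:ℝ) < (A ∩ B).card := by exact_mod_cast Finset.card_pos.mpr hCne
    have hCm : ∑ c ∈ A ∩ B, x c = m * (A ∩ B).card := by
      rw [hm]; field_simp
    have hCmB : ∑ c ∈ B ∩ A, x c = m * (B ∩ A).card := by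
      rw [Finset.inter_comm]; exact hCm
    have h1 : (∑ k ∈ A, x k) / A.card ≤ m := by
      apply avg_split_le hAne hCm
      intro a ha
      have haub : x a ≤ x j - ε := le_of_lt (hAB a ha)
      have : x a ≤ m := by
        rw [hm]
        apply le_avg_of_forall hCne
        intro c hc
        linarith [(hC c hc).1]
      exact this
    have h2 : m ≤ (∑ k ∈ B, x k) / B.card := by
      apply le_avg_split hBne hCmB
      intro b hb
      have hblb : x i + ε < x b := by
        apply hBA
        rw [Finset.mem_sdiff] at hb ⊢
        exact hb
      rw [hm]
      apply avg_le_of_forall hCne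
      intro c hc
      linarith [(hC c hc).2]
    linarith

/-- In the Hegselmann–Krause bounded-confidence model, the order of opinions is
preserved and the opinion range is non-increasing over time. -/
theorem hk_order_preserved_and_range_shrinks {n : ℕ} (hn : 0 < n)
    (ε : ℝ) (hε : 0 ≤ ε) (x : ℕ → Fin n → ℝ)
    (hupd : ∀ t i, x (t + 1) i =
      (∑ j ∈ hkNbrs ε (x t) i, x t j) / (hkNbrs ε (x t) i).card)
    (hne : Finset.univ.Nonempty := Finset.univ_nonempty_iff.mpr
      (Fin.pos_iff_nonempty.mp hn)) :
    (∀ t (i j : Fin n), x t i ≤ x t j → x (t + 1) i ≤ x (t + 1) j) ∧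
    (∀ t, Finset.univ.inf' hne (x t) ≤ Finset.univ.inf' hne (x (t + 1)) ∧
      Finset.univ.sup' hne (x (t + 1)) ≤ Finset.univ.sup' hne (x t)) := by
  constructor
  · intro t i j hij
    rw [hupd t i, hupd t j]
    exact hk_avg_mono hε hij
  · intro t
    constructor
    · apply Finset.le_inf'
      intro i _
      rw [hupd t i]
      apply le_avg_of_forall ⟨i, hk_self_mem hε (x t) i⟩
      intro a _
      exact Finset.inf'_le (x t) (Finset.mem_univ a)
    · apply Finset.sup'_le
      intro i _
      rw [hupd t i]
      apply avg_le_of_forall ⟨i, hk_self_mem hε (x t) i⟩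
      intro a _
      exact Finset.le_sup' (x t) (Finset.mem_univ a)
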